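/- Let n ≥ 2, t ≥ 1, d ≥ 1, let f_1, …, f_d ∈ Harm_t(ℝ^n), and let Z : ℝ → ℝ be a polynomial function satisfying Z(⟨x, y⟩) = ∑_{i=1}^d f_i(x) f_i(y) for all x, y ∈ S^{n-1}. Put c = −min_{−1 ≤ s ≤ 1} Z(s) and assume c > 0. If X is a spherical design of harmonic index t on S^{n-1}, then the equality |X| = 1 + Z(1)/c holds if and only if Z(⟨x, y⟩) = −c for all distinct x, y ∈ X. -/
import Mathlib


open scoped BigOperators Classical

/-- The Laplacian `∑ i, ∂²/∂xᵢ²` of a multivariate polynomial. -/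
noncomputable def mvLaplacian {n : ℕ} (f : MvPolynomial (Fin n) ℝ) : MvPolynomial (Fin n) ℝ :=
  ∑ i, MvPolynomial.pderiv i (MvPolynomial.pderiv i f)

/-- A finite nonempty subset `X` of the unit sphere `S^{n-1} ⊆ ℝ^n` is a spherical design of
harmonic index `t` if `∑_{x ∈ X} f(x) = 0` for every harmonic homogeneous polynomial `f`
of degree `t`. -/
def IsHarmonicIndexDesign (n t : ℕ) (X : Finset (Fin n → ℝ)) : Prop :=
  X.Nonempty ∧ (∀ x ∈ X, ∑ i, x i ^ 2 = 1) ∧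
    ∀ f : MvPolynomial (Fin n) ℝ, mvLaplacian f = 0 → f.IsHomogeneous t →
      ∑ x ∈ X, MvPolynomial.eval x f = 0

/-- equality in the Fisher-type bound holds if and only if `Z(⟨x,y⟩) = -c`
for all distinct points `x, y` of the design. -/
theorem fisher_type_bound_equality (n t d : ℕ) (hn : 2 ≤ n) (ht : 1 ≤ t) (hd : 1 ≤ d)
    (f : Fin d → MvPolynomial (Fin n) ℝ)
    (hharm : ∀ i, mvLaplacian (f i) = 0 ∧ (f i).IsHomogeneous t)
    (Z : Polynomial ℝ)
    (hZ : ∀ x y : Fin n → ℝ, ∑ i, x i ^ 2 = 1 → ∑ i, y i ^ 2 = 1 →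
      Z.eval (∑ i, x i * y i) = ∑ i, MvPolynomial.eval x (f i) * MvPolynomial.eval y (f i))
    (c : ℝ) (hc : IsLeast (Z.eval '' Set.Icc (-1 : ℝ) 1) (-c)) (hcpos : 0 < c)
    (X : Finset (Fin n → ℝ)) (hX : IsHarmonicIndexDesign n t X) :
    ((X.card : ℝ) = 1 + Z.eval 1 / c ↔
      ∀ x ∈ X, ∀ y ∈ X, x ≠ y → Z.eval (∑ i, x i * y i) = -c) := by
  classical
  obtain ⟨hXne, hXsph, hXdes⟩ := hX
  have hNpos : 0 < X.card := Finset.card_pos.mpr hXne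
  -- inner products lie in [-1,1]
  have hmem : ∀ x ∈ X, ∀ y ∈ X, (∑ i, x i * y i) ∈ Set.Icc (-1:ℝ) 1 := by
    intro x hx y hy
    have h1 := hXsph x hx
    have h2 := hXsph y hy
    have hcs : (∑ i, x i * y i) ^ 2 ≤ (∑ i, x i ^ 2) * (∑ i, y i ^ 2) :=
      Finset.sum_mul_sq_le_sq_mul_sq _ _ _
    rw [h1, h2, mul_one] at hcs
    have := abs_le.mp ((sq_le_one_iff_abs_le_one _).mp hcs)
    exact ⟨this.1, this.2⟩
  have hlow : ∀ x ∈ X, ∀ y ∈ X, -c ≤ Z.eval (∑ i, x i * y i) := fun x hx y hy =>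
    hc.2 ⟨_, hmem x hx y hy, rfl⟩
  -- design property
  have hdes : ∀ i, ∑ x ∈ X, MvPolynomial.eval x (f i) = 0 := fun i =>
    hXdes _ (hharm i).1 (hharm i).2
  -- double sum vanishes
  have hsum0 : ∑ x ∈ X, ∑ y ∈ X, Z.eval (∑ i, x i * y i) = 0 := by
    calc ∑ x ∈ X, ∑ y ∈ X, Z.eval (∑ i, x i * y i)
        = ∑ x ∈ X, ∑ y ∈ X, ∑ i, MvPolynomial.eval x (f i) * MvPolynomial.eval y (f i) := by
          exact Finset.sum_congr rfl fun x hx => Finset.sum_congr rfl fun y hy =>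
            hZ x y (hXsph x hx) (hXsph y hy)
      _ = ∑ x ∈ X, ∑ i, ∑ y ∈ X, MvPolynomial.eval x (f i) * MvPolynomial.eval y (f i) :=
          Finset.sum_congr rfl fun x _ => Finset.sum_comm
      _ = ∑ i, ∑ x ∈ X, ∑ y ∈ X, MvPolynomial.eval x (f i) * MvPolynomial.eval y (f i) :=
          Finset.sum_comm
      _ = ∑ i, (∑ x ∈ X, MvPolynomial.eval x (f i)) * (∑ y ∈ X, MvPolynomial.eval y (f i)) :=
          Finset.sum_congr rfl fun i _ => (Finset.sum_mul_sum X X _ _).symm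
      _ = 0 := by simp [hdes]
  -- split diagonal
  have hdiag : ∀ x ∈ X, Z.eval (∑ i, x i * x i) = Z.eval 1 := by
    intro x hx
    have : (∑ i, x i * x i) = 1 := by
      rw [← hXsph x hx]; exact Finset.sum_congr rfl fun i _ => (sq (x i)).symm
    rw [this]
  have hsplit : (X.card : ℝ) * Z.eval 1 +
      ∑ x ∈ X, ∑ y ∈ X.erase x, Z.eval (∑ i, x i * y i) = 0 := by
    have h1 : (X.card : ℝ) * Z.eval 1 = ∑ _x ∈ X, Z.eval 1 := by
      rw [Finset.sum_const, nsmul_eq_mul]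
    rw [h1, ← Finset.sum_add_distrib, ← hsum0]
    refine Finset.sum_congr rfl fun x hx => ?_
    rw [← Finset.add_sum_erase X _ hx, hdiag x hx]
  -- the shifted nonnegative sum
  set T : ℝ := ∑ x ∈ X, ∑ y ∈ X.erase x, (Z.eval (∑ i, x i * y i) + c) with hT
  have hTval : T = -((X.card : ℝ) * Z.eval 1) + c * (X.card : ℝ) * ((X.card : ℝ) - 1) := by
    have hcard : ∀ x ∈ X, ((X.erase x).card : ℝ) = (X.card : ℝ) - 1 := by
      intro x hx
      rw [Finset.card_erase_of_mem hx, Nat.cast_sub hNpos, Nat.cast_one]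
    have : T = (∑ x ∈ X, ∑ y ∈ X.erase x, Z.eval (∑ i, x i * y i))
        + ∑ x ∈ X, ((X.erase x).card : ℝ) * c := by
      rw [hT, ← Finset.sum_add_distrib]
      refine Finset.sum_congr rfl fun x hx => ?_
      rw [Finset.sum_add_distrib, Finset.sum_const, nsmul_eq_mul]
    rw [this]
    have h2 : ∑ x ∈ X, ((X.erase x).card : ℝ) * c = (X.card : ℝ) * (((X.card : ℝ) - 1) * c) := by
      rw [Finset.sum_congr rfl (fun x hx => by rw [hcard x hx]), Finset.sum_const, nsmul_eq_mul]
    rw [h2]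
    have h3 : ∑ x ∈ X, ∑ y ∈ X.erase x, Z.eval (∑ i, x i * y i) =
        -((X.card : ℝ) * Z.eval 1) := by linarith [hsplit]
    rw [h3]; ring
  have hTnonneg : ∀ x ∈ X, ∀ y ∈ X.erase x, 0 ≤ Z.eval (∑ i, x i * y i) + c := by
    intro x hx y hy
    have := hlow x hx y (Finset.mem_of_mem_erase hy)
    linarith
  have hTzero_iff : T = 0 ↔ ∀ x ∈ X, ∀ y ∈ X, x ≠ y → Z.eval (∑ i, x i * y i) = -c := by
    rw [hT, Finset.sum_eq_zero_iff_of_nonneg (fun x hx =>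
      Finset.sum_nonneg (fun y hy => hTnonneg x hx y hy))]
    constructor
    · intro h x hx y hy hxy
      have hy' : y ∈ X.erase x := Finset.mem_erase.mpr ⟨fun e => hxy e.symm, hy⟩
      have := (Finset.sum_eq_zero_iff_of_nonneg (hTnonneg x hx)).mp (h x hx) y hy'
      linarith
    · intro h x hx
      refine Finset.sum_eq_zero fun y hy => ?_
      obtain ⟨hne, hyX⟩ := Finset.mem_erase.mp hy
      rw [h x hx y hyX (fun e => hne e.symm)]; ring
  rw [← hTzero_iff]
  rw [hTval]
  have hN1 : (1:ℝ) ≤ (X.card : ℝ) := by exact_mod_cast hNpos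
  have hNne : (X.card : ℝ) ≠ 0 := by positivity
  constructor
  · intro h
    have hz : Z.eval 1 = c * ((X.card : ℝ) - 1) := by
      field_simp at h
      nlinarith [h]
    rw [hz]; ring
  · intro h
    have e : (X.card : ℝ) * Z.eval 1 = (X.card : ℝ) * (c * ((X.card : ℝ) - 1)) := by
      linear_combination -h
    have hz : Z.eval 1 = c * ((X.card : ℝ) - 1) := mul_left_cancel₀ hNne e
    rw [hz, mul_div_cancel_left₀ _ hcpos.ne']
    ring
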